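/- arXiv:1811.12014 — 4 statements merged into one kernel-verified Lean document; each statement's English description precedes it below -/
import Mathlib

section
/- For every λ > 0, every α ∈ ℝⁿ and every φ ∈ BUC_η, the function ψ(θ) = (1/λ) e^{λθ}[α + φ(0)] + ∫_θ^0 e^{λ(θ-l)} φ(l) dl belongs to BUC_η, is continuously differentiable with ψ' ∈ BUC_η, and satisfies ψ'(0) = α and λψ - ψ' = φ. -/
open Set Filter Topology

noncomputable def etaNorm (η : ℝ) {F : Type*} [NormedAddCommGroup F] (φ : ℝ → F) : ℝ :=
  sSup ((fun θ => Real.exp (η * θ) * ‖φ θ‖) '' Set.Iic 0)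

def BUCmem (η : ℝ) {F : Type*} [NormedAddCommGroup F] [NormedSpace ℝ F] (φ : ℝ → F) : Prop :=
  ContinuousOn φ (Set.Iic 0) ∧
  BddAbove ((fun θ => Real.exp (η * θ) * ‖φ θ‖) '' Set.Iic 0) ∧
  UniformContinuousOn (fun θ => Real.exp (η * θ) • φ θ) (Set.Iic 0)

def BUC1mem (η : ℝ) {F : Type*} [NormedAddCommGroup F] [NormedSpace ℝ F] (φ φ' : ℝ → F) : Prop :=
  BUCmem η φ ∧ BUCmem η φ' ∧ ∀ θ ≤ (0:ℝ), HasDerivWithinAt φ (φ' θ) (Set.Iic 0) θ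

/-
With `c = α + φ 0`, `ψ θ = e^{λθ} c / λ + ∫_θ^0 e^{λ(θ-l)} φ l dl` is the variation-of-constants
solution of `λψ - ψ' = φ`, so differentiation gives `ψ' = λψ - φ` and `ψ'(0) = c - φ 0 = α`.
After multiplying by the weight `e^{ηθ}` the kernel becomes `e^{(λ+η)(θ-l)} · e^{ηl}`, and since
`∫_θ^0 e^{(λ+η)(θ-l)} dl ≤ 1/(λ+η)` the weighted norm of `ψ` is bounded; then so is that of
`ψ' = λψ - φ`. The weighted function `e^{ηθ}ψ` then has a bounded derivative, hence is Lipschitz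
and uniformly continuous, and `ψ'` inherits uniform continuity from `ψ` and `φ` by linearity.
-/

open Real

theorem bddAbove_weighted_iff {F : Type*} [NormedAddCommGroup F] {η : ℝ} {φ : ℝ → F} :
    BddAbove ((fun θ => exp (η * θ) * ‖φ θ‖) '' Iic 0) ↔
      ∃ M, ∀ θ ≤ 0, exp (η * θ) * ‖φ θ‖ ≤ M := by
  simp [BddAbove, upperBounds, Set.Nonempty]

theorem integral_exp_mul_sub {k : ℝ} (hk : k ≠ 0) (θ : ℝ) :
    ∫ l in θ..0, exp (k * (θ - l)) = (1 - exp (k * θ)) / k := by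
  simp [intervalIntegral.integral_comp_sub_left (fun x => exp (k * x)), hk, integral_exp,
    div_eq_inv_mul]

variable {F : Type*} [NormedAddCommGroup F] [NormedSpace ℝ F] {η : ℝ}

theorem exists_weighted_bound_smul_sub (a : ℝ) {φ ψ : ℝ → F}
    (hφ : ∃ M, ∀ θ ≤ 0, exp (η * θ) * ‖φ θ‖ ≤ M)
    (hψ : ∃ N, ∀ θ ≤ 0, exp (η * θ) * ‖ψ θ‖ ≤ N) :
    ∃ K, ∀ θ ≤ 0, exp (η * θ) * ‖a • φ θ - ψ θ‖ ≤ K := by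
  obtain ⟨M, hM⟩ := hφ
  obtain ⟨N, hN⟩ := hψ
  refine ⟨|a| * M + N, fun θ hθ => ?_⟩
  calc exp (η * θ) * ‖a • φ θ - ψ θ‖ ≤ exp (η * θ) * (|a| * ‖φ θ‖ + ‖ψ θ‖) := by
        grw [norm_sub_le, norm_smul, Real.norm_eq_abs]
    _ = |a| * (exp (η * θ) * ‖φ θ‖) + exp (η * θ) * ‖ψ θ‖ := by ring
    _ ≤ |a| * M + N := by grw [hM θ hθ, hN θ hθ]

theorem BUCmem.const_smul_sub (a : ℝ) {φ ψ : ℝ → F} (hφ : BUCmem η φ) (hψ : BUCmem η ψ) :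
    BUCmem η (fun θ => a • φ θ - ψ θ) := by
  refine ⟨(hφ.1.const_smul a).sub hψ.1, bddAbove_weighted_iff.2 <|
    exists_weighted_bound_smul_sub a (bddAbove_weighted_iff.1 hφ.2.1)
      (bddAbove_weighted_iff.1 hψ.2.1), ?_⟩
  have hw : (fun θ => exp (η * θ) • (a • φ θ - ψ θ)) =
      fun θ => a • (exp (η * θ) • φ θ) - exp (η * θ) • ψ θ := by
    ext1 θ; rw [smul_sub, smul_comm]
  rw [hw, uniformContinuousOn_iff_restrict]
  exact ((uniformContinuousOn_iff_restrict.1 hφ.2.2).const_smul a).sub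
    (uniformContinuousOn_iff_restrict.1 hψ.2.2)

theorem BUCmem.of_hasDerivWithinAt {φ φ' : ℝ → F}
    (hd : ∀ θ ≤ 0, HasDerivWithinAt φ (φ' θ) (Iic 0) θ)
    (hb : ∃ M, ∀ θ ≤ 0, exp (η * θ) * ‖φ θ‖ ≤ M)
    (hb' : ∃ M', ∀ θ ≤ 0, exp (η * θ) * ‖φ' θ‖ ≤ M') : BUCmem η φ := by
  refine ⟨fun θ hθ => (hd θ hθ).continuousWithinAt, bddAbove_weighted_iff.2 hb, ?_⟩
  -- `e^{ηθ} ‖-η • φ θ - φ' θ‖` is the norm of the derivative `e^{ηθ} • (φ' θ + η • φ θ)` of `e^{ηθ} φ`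
  obtain ⟨K, hK⟩ := exists_weighted_bound_smul_sub (-η) hb hb'
  have hw : ∀ θ ∈ Iic (0 : ℝ), HasDerivWithinAt (fun θ => exp (η * θ) • φ θ)
      (exp (η * θ) • φ' θ + (exp (η * θ) * η) • φ θ) (Iic 0) θ := fun θ hθ =>
    ((hasDerivAt_id θ).const_mul η).exp.hasDerivWithinAt.smul (hd θ hθ) |>.congr_deriv (by simp)
  refine (Convex.lipschitzOnWith_of_nnnorm_hasDerivWithin_le (C := K.toNNReal) (convex_Iic 0) hw
    fun θ hθ => ?_).uniformContinuousOn
  rw [← NNReal.coe_le_coe, coe_nnnorm]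
  refine le_trans (le_of_eq ?_) ((hK θ hθ).trans (le_coe_toNNReal K))
  calc ‖exp (η * θ) • φ' θ + (exp (η * θ) * η) • φ θ‖
      = ‖exp (η * θ) • ((-η) • φ θ - φ' θ)‖ := by
        rw [← norm_neg]; congr 1; module
    _ = exp (η * θ) * ‖(-η) • φ θ - φ' θ‖ := by rw [norm_smul, norm_of_nonneg (exp_pos _).le]

noncomputable def expConv (lam : ℝ) (f : ℝ → F) (θ : ℝ) : F :=
  ∫ l in θ..0, exp (lam * (θ - l)) • f l

section ExpConv

variable {lam : ℝ} {f : ℝ → F}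

theorem expConv_eq_exp_smul (θ : ℝ) :
    expConv lam f θ = exp (lam * θ) • ∫ l in θ..0, exp (-(lam * l)) • f l := by
  rw [← intervalIntegral.integral_smul]
  refine intervalIntegral.integral_congr fun l _ => ?_
  rw [smul_smul, ← exp_add, mul_sub, sub_eq_add_neg]

theorem expConv_congr_Iic {g : ℝ → F} (h : EqOn f g (Iic 0)) {θ : ℝ} (hθ : θ ≤ 0) :
    expConv lam f θ = expConv lam g θ := by
  refine intervalIntegral.integral_congr fun l hl => ?_
  rw [uIcc_of_le hθ] at hl
  rw [h hl.2]

theorem weighted_norm_expConv_le {M : ℝ} (hk : 0 < lam + η)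
    (hM : ∀ l ≤ 0, exp (η * l) * ‖f l‖ ≤ M) {θ : ℝ} (hθ : θ ≤ 0) :
    exp (η * θ) * ‖expConv lam f θ‖ ≤ M / (lam + η) := by
  have hM0 : 0 ≤ M := (mul_nonneg (exp_pos _).le (norm_nonneg _)).trans (hM 0 le_rfl)
  have hpt : ∀ l ∈ Ioc θ 0,
      ‖exp (η * θ) • exp (lam * (θ - l)) • f l‖ ≤ M * exp ((lam + η) * (θ - l)) := by
    intro l hl
    rw [norm_smul, norm_smul, norm_of_nonneg (exp_pos _).le, norm_of_nonneg (exp_pos _).le]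
    calc exp (η * θ) * (exp (lam * (θ - l)) * ‖f l‖)
        = exp ((lam + η) * (θ - l)) * (exp (η * l) * ‖f l‖) := by
          rw [← mul_assoc, ← mul_assoc, ← exp_add, ← exp_add]; ring_nf
      _ ≤ M * exp ((lam + η) * (θ - l)) := by grw [hM l hl.2, mul_comm]
  calc exp (η * θ) * ‖expConv lam f θ‖
      = ‖∫ l in θ..0, exp (η * θ) • exp (lam * (θ - l)) • f l‖ := by
        rw [intervalIntegral.integral_smul, norm_smul, norm_of_nonneg (exp_pos _).le, expConv]
    _ ≤ ∫ l in θ..0, M * exp ((lam + η) * (θ - l)) :=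
        intervalIntegral.norm_integral_le_of_norm_le hθ (MeasureTheory.ae_of_all _ hpt)
          (Continuous.intervalIntegrable (by fun_prop) _ _)
    _ = M * (1 - exp ((lam + η) * θ)) / (lam + η) := by
        rw [intervalIntegral.integral_const_mul, integral_exp_mul_sub hk.ne', mul_div_assoc]
    _ ≤ M / (lam + η) := by
        gcongr
        nlinarith [exp_pos ((lam + η) * θ)]

variable [CompleteSpace F]

theorem hasDerivAt_expConv (hf : Continuous f) (θ : ℝ) :
    HasDerivAt (expConv lam f) (lam • expConv lam f θ - f θ) θ := by
  have hg : Continuous fun l => exp (-(lam * l)) • f l :=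
    (continuous_const.mul continuous_id).neg.rexp.smul hf
  have hint : HasDerivAt (fun u => ∫ l in u..0, exp (-(lam * l)) • f l)
      (-(exp (-(lam * θ)) • f θ)) θ := by
    rw [funext fun u => intervalIntegral.integral_symm (0 : ℝ) u]
    exact (hg.integral_hasStrictDerivAt 0 θ).hasDerivAt.neg
  have hexp : HasDerivAt (fun u => exp (lam * u)) (exp (lam * θ) * lam) θ := by
    simpa using ((hasDerivAt_id θ).const_mul lam).exp
  rw [funext expConv_eq_exp_smul]
  refine (hexp.smul hint).congr_deriv ?_
  rw [smul_neg, smul_smul, ← exp_add, add_neg_cancel, exp_zero, one_smul, mul_comm, ← smul_smul]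
  abel

theorem hasDerivWithinAt_expConv (hf : ContinuousOn f (Iic 0)) {θ : ℝ} (hθ : θ ≤ 0) :
    HasDerivWithinAt (expConv lam f) (lam • expConv lam f θ - f θ) (Iic 0) θ := by
  -- extend `f` constantly to the right of `0`, where the fundamental theorem of calculus applies
  set g : ℝ → F := fun l => f (min l 0)
  have hfg : EqOn f g (Iic 0) := fun l hl => by simp [g, min_eq_left (mem_Iic.1 hl)]
  have hg : Continuous g :=
    hf.comp_continuous (continuous_id.min continuous_const) fun l => min_le_right l 0
  rw [expConv_congr_Iic hfg hθ, hfg hθ]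
  exact (hasDerivAt_expConv hg θ).hasDerivWithinAt.congr (fun _ hl => expConv_congr_Iic hfg hl)
    (expConv_congr_Iic hfg hθ)

end ExpConv

noncomputable def resolventFn (lam : ℝ) (c : F) (f : ℝ → F) (θ : ℝ) : F :=
  ((1 / lam) * exp (lam * θ)) • c + expConv lam f θ

section Resolvent

variable {lam : ℝ} {c : F} {f : ℝ → F}

theorem smul_resolventFn_zero (hlam : lam ≠ 0) : lam • resolventFn lam c f 0 = c := by
  simp [resolventFn, expConv, smul_smul, hlam]

theorem weighted_norm_resolventFn_le {M : ℝ} (hlam : 0 < lam) (hk : 0 < lam + η)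
    (hM : ∀ l ≤ 0, exp (η * l) * ‖f l‖ ≤ M) {θ : ℝ} (hθ : θ ≤ 0) :
    exp (η * θ) * ‖resolventFn lam c f θ‖ ≤ ‖c‖ / lam + M / (lam + η) := by
  have hexp : exp (η * θ) * ‖((1 / lam) * exp (lam * θ)) • c‖ ≤ ‖c‖ / lam :=
    calc exp (η * θ) * ‖((1 / lam) * exp (lam * θ)) • c‖ = exp ((lam + η) * θ) * (‖c‖ / lam) := by
          rw [norm_smul, norm_of_nonneg (by positivity), add_mul, exp_add]; ring
      _ ≤ ‖c‖ / lam := mul_le_of_le_one_left (by positivity) (exp_le_one_iff.2 (by nlinarith))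
  calc exp (η * θ) * ‖resolventFn lam c f θ‖
      ≤ exp (η * θ) * ‖((1 / lam) * exp (lam * θ)) • c‖ + exp (η * θ) * ‖expConv lam f θ‖ := by
        rw [← mul_add]; gcongr; exact norm_add_le _ _
    _ ≤ ‖c‖ / lam + M / (lam + η) := add_le_add hexp (weighted_norm_expConv_le hk hM hθ)

theorem hasDerivWithinAt_resolventFn [CompleteSpace F] (hlam : lam ≠ 0)
    (hf : ContinuousOn f (Iic 0)) {θ : ℝ} (hθ : θ ≤ 0) :
    HasDerivWithinAt (resolventFn lam c f) (lam • resolventFn lam c f θ - f θ) (Iic 0) θ := by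
  have hexp : HasDerivAt (fun u => ((1 / lam) * exp (lam * u)) • c)
      (lam • ((1 / lam) * exp (lam * θ)) • c) θ := by
    refine ((((hasDerivAt_id θ).const_mul lam).exp.const_mul (1 / lam)).smul_const c).congr_deriv ?_
    rw [smul_smul, id]; congr 1; field_simp
  refine (hexp.hasDerivWithinAt.add (hasDerivWithinAt_expConv hf hθ)).congr_deriv ?_
  rw [resolventFn, smul_add, add_sub_assoc]

end Resolvent

/-- for `λ > 0`, `α ∈ ℝⁿ`, `φ ∈ BUC_η`, the function
`ψ(θ) = (1/λ) e^{λθ}[α + φ(0)] + ∫_θ^0 e^{λ(θ-l)} φ(l) dl` belongs to `BUC_η¹`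
(`ψ` is C¹ with `ψ, ψ' ∈ BUC_η`) and satisfies `ψ'(0) = α` and `λψ - ψ' = φ` on `(-∞,0]`. -/
theorem resolvent_formula (η : ℝ) (hη : 0 < η) (n : ℕ) (lam : ℝ) (hlam : 0 < lam)
    (α : Fin n → ℝ) (φ : ℝ → (Fin n → ℝ)) (hφ : BUCmem η φ)
    (ψ : ℝ → (Fin n → ℝ))
    (hψ : ψ = fun θ => ((1 / lam) * Real.exp (lam * θ)) • (α + φ 0)
        + ∫ l in θ..(0:ℝ), Real.exp (lam * (θ - l)) • φ l) :
    ∃ ψ' : ℝ → (Fin n → ℝ), BUC1mem η ψ ψ' ∧ ψ' 0 = α ∧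
      ∀ θ ≤ (0:ℝ), lam • ψ θ - ψ' θ = φ θ := by
  replace hψ : ψ = resolventFn lam (α + φ 0) φ := hψ
  subst hψ
  obtain ⟨M, hM⟩ := bddAbove_weighted_iff.1 hφ.2.1
  have hderiv : ∀ θ ≤ 0, HasDerivWithinAt (resolventFn lam (α + φ 0) φ)
      (lam • resolventFn lam (α + φ 0) φ θ - φ θ) (Iic 0) θ :=
    fun θ hθ => hasDerivWithinAt_resolventFn hlam.ne' hφ.1 hθ
  have hbound : ∃ K, ∀ θ ≤ 0, exp (η * θ) * ‖resolventFn lam (α + φ 0) φ θ‖ ≤ K :=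
    ⟨_, fun θ hθ => weighted_norm_resolventFn_le hlam (by linarith) hM hθ⟩
  have hBUC : BUCmem η (resolventFn lam (α + φ 0) φ) :=
    .of_hasDerivWithinAt hderiv hbound (exists_weighted_bound_smul_sub lam hbound ⟨M, hM⟩)
  refine ⟨_, ⟨hBUC, hBUC.const_smul_sub lam hφ, hderiv⟩, ?_, fun θ _ => sub_sub_cancel _ _⟩
  rw [smul_resolventFn_zero hlam.ne', add_sub_cancel_right]
end

section
/- For every λ > 0, α ∈ ℝⁿ and φ ∈ BUC_η, the function ψ(θ) = (1/λ)e^{λθ}[α + φ(0)] + ∫_θ^0 e^{λ(θ-l)} φ(l) dl satisfies ‖ψ‖_η ≤ (1/λ)(‖α‖ + ‖φ‖_η), where ‖ψ‖_η = sup_{θ≤0} e^{ηθ}‖ψ(θ)‖. Consequently the resolvent of A satisfies ‖(λI - A)^{-1}‖ ≤ 1/λ for all λ > 0, so A is a Hille–Yosida operator with constants (M, ω) = (1, 0). -/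
open Set Filter Topology

/-!
Write `M = ‖φ‖_η` and `t = e^{λθ} ≤ 1`. Since `η ≥ 0` and `θ ≤ l ≤ 0`, we have
`e^{ηθ}‖φ l‖ ≤ e^{ηl}‖φ l‖ ≤ M`, so the weighted integral term is at most
`M ∫_θ^0 e^{λ(θ-l)} dl = M(1 - t)/λ`, while the weighted first term is at most `t(‖α‖ + M)/λ`.
The sum is `(t‖α‖ + M)/λ ≤ (‖α‖ + M)/λ`.
-/

section EtaNorm

variable {η : ℝ} {F : Type*} [NormedAddCommGroup F] {φ : ℝ → F}

theorem exp_mul_norm_le_etaNorm (hφ : BddAbove ((fun θ => Real.exp (η * θ) * ‖φ θ‖) '' Iic 0))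
    {θ : ℝ} (hθ : θ ≤ 0) :
    Real.exp (η * θ) * ‖φ θ‖ ≤ etaNorm η φ :=
  le_csSup hφ ⟨θ, hθ, rfl⟩

theorem norm_le_etaNorm (hφ : BddAbove ((fun θ => Real.exp (η * θ) * ‖φ θ‖) '' Iic 0))
    {θ : ℝ} (hθ : θ ≤ 0) :
    ‖φ θ‖ ≤ Real.exp (-(η * θ)) * etaNorm η φ := by
  rw [Real.exp_neg, inv_mul_eq_div, le_div_iff₀ (Real.exp_pos _), mul_comm]
  exact exp_mul_norm_le_etaNorm hφ hθ

theorem norm_zero_le_etaNorm (hφ : BddAbove ((fun θ => Real.exp (η * θ) * ‖φ θ‖) '' Iic 0)) :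
    ‖φ 0‖ ≤ etaNorm η φ := by
  simpa using exp_mul_norm_le_etaNorm hφ le_rfl

theorem etaNorm_le_of_forall_le {C : ℝ} (h : ∀ θ ≤ (0 : ℝ), Real.exp (η * θ) * ‖φ θ‖ ≤ C) :
    etaNorm η φ ≤ C :=
  csSup_le (nonempty_Iic.image _) (forall_mem_image.2 h)

end EtaNorm

theorem integral_exp_mul_sub_s3 {c : ℝ} (hc : c ≠ 0) (a b : ℝ) :
    ∫ l in a..b, Real.exp (c * (a - l)) = (1 - Real.exp (c * (a - b))) / c := by
  have hderiv : ∀ l,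
      HasDerivAt (fun x => -Real.exp (c * (a - x)) / c) (Real.exp (c * (a - l))) l := by
    intro l
    refine ((((hasDerivAt_id' l).const_sub a).const_mul c).exp.neg.div_const c).congr_deriv ?_
    field_simp
  rw [intervalIntegral.integral_eq_sub_of_hasDerivAt (fun l _ => hderiv l)
    (Continuous.intervalIntegrable (by fun_prop) _ _)]
  simp only [sub_self, mul_zero, Real.exp_zero]
  ring

section Resolvent

variable {F : Type*} [NormedAddCommGroup F] [NormedSpace ℝ F]

theorem norm_integral_exp_mul_sub_smul_le {lam : ℝ} (hlam : lam ≠ 0) {θ K : ℝ} (hθ : θ ≤ 0)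
    {φ : ℝ → F} (hK : ∀ l ∈ Ioc θ 0, ‖φ l‖ ≤ K) :
    ‖∫ l in θ..0, Real.exp (lam * (θ - l)) • φ l‖ ≤ K * (1 - Real.exp (lam * θ)) / lam := by
  calc ‖∫ l in θ..0, Real.exp (lam * (θ - l)) • φ l‖
      ≤ ∫ l in θ..0, Real.exp (lam * (θ - l)) * K := by
        refine intervalIntegral.norm_integral_le_of_norm_le hθ
          (MeasureTheory.ae_of_all _ fun l hl => ?_)
          (Continuous.intervalIntegrable (by fun_prop) _ _)
        rw [norm_smul, Real.norm_of_nonneg (Real.exp_pos _).le]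
        exact mul_le_mul_of_nonneg_left (hK l hl) (Real.exp_pos _).le
    _ = K * (1 - Real.exp (lam * θ)) / lam := by
        rw [intervalIntegral.integral_mul_const, integral_exp_mul_sub_s3 hlam, sub_zero]
        ring

-- The second component `ψ` of `(λI - A)⁻¹ (α, φ)`.
noncomputable def resolventFun (lam : ℝ) (α : F) (φ : ℝ → F) (θ : ℝ) : F :=
  ((1 / lam) * Real.exp (lam * θ)) • (α + φ 0) + ∫ l in θ..(0:ℝ), Real.exp (lam * (θ - l)) • φ l

theorem exp_mul_norm_resolventFun_le {η lam : ℝ} (hη : 0 ≤ η) (hlam : 0 < lam) {φ : ℝ → F}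
    (hφ : BddAbove ((fun θ => Real.exp (η * θ) * ‖φ θ‖) '' Iic 0)) (α : F) {θ : ℝ} (hθ : θ ≤ 0) :
    Real.exp (η * θ) * ‖resolventFun lam α φ θ‖ ≤ (1 / lam) * (‖α‖ + etaNorm η φ) := by
  set M := etaNorm η φ
  set t := Real.exp (lam * θ)
  set w := Real.exp (η * θ)
  have ht : t ≤ 1 := Real.exp_le_one_iff.2 (mul_nonpos_of_nonneg_of_nonpos hlam.le hθ)
  have hw : w ≤ 1 := Real.exp_le_one_iff.2 (mul_nonpos_of_nonneg_of_nonpos hη hθ)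
  have hw_inv : w * Real.exp (-(η * θ)) = 1 := by
    rw [← Real.exp_add, add_neg_cancel, Real.exp_zero]
  have hM : 0 ≤ M := (norm_nonneg _).trans (norm_zero_le_etaNorm hφ)
  have hfirst : ‖((1 / lam) * t) • (α + φ 0)‖ ≤ (1 / lam) * t * (‖α‖ + M) := by
    rw [norm_smul, Real.norm_of_nonneg (by positivity)]
    gcongr
    exact (norm_add_le _ _).trans (add_le_add le_rfl (norm_zero_le_etaNorm hφ))
  have hφ_le : ∀ l ∈ Ioc θ 0, ‖φ l‖ ≤ Real.exp (-(η * θ)) * M := fun l hl =>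
    (norm_le_etaNorm hφ hl.2).trans <| mul_le_mul_of_nonneg_right
      (Real.exp_le_exp.2 (by nlinarith [hl.1])) hM
  have hsecond := norm_integral_exp_mul_sub_smul_le hlam.ne' hθ hφ_le
  have hfirst_nonneg : 0 ≤ (1 / lam) * t * (‖α‖ + M) := by positivity
  calc w * ‖resolventFun lam α φ θ‖
      ≤ w * ((1 / lam) * t * (‖α‖ + M) + Real.exp (-(η * θ)) * M * (1 - t) / lam) :=
        mul_le_mul_of_nonneg_left ((norm_add_le _ _).trans (add_le_add hfirst hsecond))
          (Real.exp_pos _).le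
    _ = w * ((1 / lam) * t * (‖α‖ + M)) + M * (1 - t) / lam := by
        linear_combination M * (1 - t) / lam * hw_inv
    _ ≤ (1 / lam) * t * (‖α‖ + M) + M * (1 - t) / lam :=
        add_le_add_left (mul_le_of_le_one_left hfirst_nonneg hw) _
    _ = (1 / lam) * (t * ‖α‖ + M) := by ring
    _ ≤ (1 / lam) * (‖α‖ + M) := by
        gcongr
        exact mul_le_of_le_one_left (norm_nonneg _) ht

end Resolvent

/-- the resolvent estimate `‖ψ‖_η ≤ (1/λ)(‖α‖ + ‖φ‖_η)` for
`ψ(θ) = (1/λ)e^{λθ}[α + φ(0)] + ∫_θ^0 e^{λ(θ-l)}φ(l) dl`, i.e. `‖(λI - A)^{-1}‖ ≤ 1/λ`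
for every `λ > 0`, so `A` is a Hille–Yosida operator with `(M,ω) = (1,0)`. -/
theorem resolvent_estimate (η : ℝ) (hη : 0 < η) (n : ℕ) (lam : ℝ) (hlam : 0 < lam)
    (α : Fin n → ℝ) (φ : ℝ → (Fin n → ℝ)) (hφ : BUCmem η φ) :
    etaNorm η (fun θ => ((1 / lam) * Real.exp (lam * θ)) • (α + φ 0)
        + ∫ l in θ..(0:ℝ), Real.exp (lam * (θ - l)) • φ l)
      ≤ (1 / lam) * (‖α‖ + etaNorm η φ) :=
  etaNorm_le_of_forall_le fun _ hθ => exp_mul_norm_resolventFun_le hη.le hlam hφ.2.1 α hθ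
end

section
/- Let L̂ : BUC_η → ℝⁿ be a bounded linear map and let λ ∈ ℂ with Re(λ) > -η. Then λ is an eigenvalue of the operator (A+L)₀ (equivalently, there exists a nonzero φ ∈ BUC_η¹ with φ' = λφ on (-∞,0] and φ'(0) = L̂(φ)) if and only if det(Δ(λ)) = 0, where Δ(λ) = λI - L̂(e^{λ·}I) ∈ M_n(ℂ) is the characteristic matrix obtained by applying L̂ columnwise to the functions θ ↦ e^{λθ} eⱼ. -/
open Set Filter Topology

open Matrix

/-- The characteristic matrix `Δ(λ) = λI - L̂(e^{λ·}I)`, whose `j`-th column is obtained by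
applying `L̂` to the function `θ ↦ e^{λθ} e_j`. -/
noncomputable def charMatrix {n : ℕ} (Lhat : (ℝ → (Fin n → ℂ)) →ₗ[ℂ] (Fin n → ℂ))
    (z : ℂ) : Matrix (Fin n) (Fin n) ℂ :=
  Matrix.of fun i j =>
    (if i = j then z else 0) -
      Lhat (fun θ => fun k => if k = j then Complex.exp (z * θ) else 0) i

/-!
An eigenfunction `φ` solves `φ' = λφ` on `(-∞, 0]`, so `θ ↦ e^{-λθ} φ θ` has derivative zero
and `φ θ = e^{λθ} φ 0`. Conversely every `θ ↦ e^{λθ} v` lies in `BUC_η¹` once `Re λ > -η`,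
since `e^{ηθ} e^{λθ} v = e^{(η+λ)θ} v` is bounded and Lipschitz on `(-∞, 0]`. Since `L̂` only
sees values on `(-∞, 0]`, both directions reduce to `Δ(λ) v = λv - L̂(e^{λ·} v)`: the boundary
condition `φ'(0) = L̂ φ` says exactly that `Δ(λ) (φ 0) = 0`.
-/

open Complex

variable {E : Type*} [NormedAddCommGroup E] [NormedSpace ℂ E]

lemma hasDerivAt_cexp_mul_ofReal (c : ℂ) (θ : ℝ) :
    HasDerivAt (fun θ : ℝ => cexp (c * θ)) (c * cexp (c * θ)) θ := by
  have h : HasDerivAt (fun θ : ℝ => c * (θ : ℂ)) c θ := by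
    simpa using ((hasDerivAt_id θ).ofReal_comp).const_mul c
  simpa [mul_comm] using h.cexp

lemma norm_cexp_mul_ofReal_le_one {c : ℂ} (hc : 0 ≤ c.re) {θ : ℝ} (hθ : θ ≤ 0) :
    ‖cexp (c * θ)‖ ≤ 1 := by
  rw [norm_exp, Real.exp_le_one_iff, re_mul_ofReal]
  exact mul_nonpos_of_nonneg_of_nonpos hc hθ

lemma lipschitzOnWith_cexp_mul_ofReal_smul {c : ℂ} (hc : 0 ≤ c.re) (w : E) :
    LipschitzOnWith (‖c‖₊ * ‖w‖₊) (fun θ : ℝ => cexp (c * θ) • w) (Iic 0) := by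
  refine (convex_Iic 0).lipschitzOnWith_of_nnnorm_hasDerivWithin_le
    (fun θ _ => ((hasDerivAt_cexp_mul_ofReal c θ).smul_const w).hasDerivWithinAt) ?_
  intro θ hθ
  rw [← NNReal.coe_le_coe]
  push_cast
  rw [norm_smul, norm_mul]
  gcongr
  exact mul_le_of_le_one_right (norm_nonneg c) (norm_cexp_mul_ofReal_le_one hc hθ)

lemma real_exp_smul_cexp_smul (η : ℝ) (z : ℂ) (θ : ℝ) (w : E) :
    Real.exp (η * θ) • cexp (z * θ) • w = cexp ((η + z) * θ) • w := by
  rw [← smul_assoc, real_smul, ofReal_exp, ← Complex.exp_add]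
  push_cast
  ring_nf

lemma bucMem_cexp_mul_ofReal_smul {η : ℝ} {z : ℂ} (hz : -η < z.re) (w : E) :
    BUCmem η (fun θ : ℝ => cexp (z * θ) • w) := by
  have hc : 0 ≤ ((η : ℂ) + z).re := by simp only [add_re, ofReal_re]; linarith
  refine ⟨?_, ⟨‖w‖, ?_⟩, ?_⟩
  · exact (((continuous_const.mul continuous_ofReal).cexp).smul continuous_const).continuousOn
  · rintro _ ⟨θ, hθ, rfl⟩
    calc Real.exp (η * θ) * ‖cexp (z * θ) • w‖
        = ‖Real.exp (η * θ) • cexp (z * θ) • w‖ := by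
          rw [norm_smul_of_nonneg (Real.exp_pos _).le]
      _ = ‖cexp ((η + z) * θ)‖ * ‖w‖ := by rw [real_exp_smul_cexp_smul, norm_smul]
      _ ≤ ‖w‖ := mul_le_of_le_one_left (norm_nonneg w) (norm_cexp_mul_ofReal_le_one hc hθ)
  · simp_rw [real_exp_smul_cexp_smul]
    exact (lipschitzOnWith_cexp_mul_ofReal_smul hc w).uniformContinuousOn

lemma buc1Mem_cexp_mul_ofReal_smul {η : ℝ} {z : ℂ} (hz : -η < z.re) (w : E) :
    BUC1mem η (fun θ : ℝ => cexp (z * θ) • w) (fun θ => z • cexp (z * θ) • w) := by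
  refine ⟨bucMem_cexp_mul_ofReal_smul hz w, ?_, fun θ _ => ?_⟩
  · simpa only [smul_comm z] using bucMem_cexp_mul_ofReal_smul hz (z • w)
  · simpa only [smul_smul] using
      ((hasDerivAt_cexp_mul_ofReal z θ).smul_const w).hasDerivWithinAt

lemma Convex.eq_cexp_smul_of_hasDerivWithinAt {s : Set ℝ} (hs : Convex ℝ s) {φ : ℝ → E}
    {z : ℂ} (hφ : ∀ t ∈ s, HasDerivWithinAt φ (z • φ t) s t) {a b : ℝ} (ha : a ∈ s)
    (hb : b ∈ s) : φ b = cexp (z * (b - a)) • φ a := by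
  have hψ : ∀ t ∈ s, HasDerivWithinAt (fun t : ℝ => cexp (-z * t) • φ t) 0 s t := by
    intro t ht
    refine (((hasDerivAt_cexp_mul_ofReal (-z) t).hasDerivWithinAt).smul (hφ t ht)).congr_deriv ?_
    rw [smul_smul, ← add_smul]
    ring_nf
    rw [zero_smul]
  have hψab : cexp (-z * b) • φ b = cexp (-z * a) • φ a := by
    simpa [sub_eq_zero] using
      hs.norm_image_sub_le_of_norm_hasDerivWithin_le (C := 0) hψ (fun _ _ => by simp) ha hb
  calc φ b = cexp (z * b) • cexp (-z * b) • φ b := by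
        rw [smul_smul, ← Complex.exp_add, neg_mul, add_neg_cancel, Complex.exp_zero, one_smul]
    _ = cexp (z * (b - a)) • φ a := by
        rw [hψab, smul_smul, ← Complex.exp_add]
        ring_nf

lemma charMatrix_mulVec {n : ℕ} (Lhat : (ℝ → (Fin n → ℂ)) →ₗ[ℂ] (Fin n → ℂ)) (z : ℂ)
    (w : Fin n → ℂ) :
    charMatrix Lhat z *ᵥ w = z • w - Lhat (fun θ => cexp (z * θ) • w) := by
  have hcols : (fun θ : ℝ => cexp (z * θ) • w)
      = ∑ j, w j • fun (θ : ℝ) k => if k = j then cexp (z * θ) else 0 := by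
    ext θ k
    simp [Finset.sum_apply, mul_comm]
  ext i
  simp [hcols, charMatrix, mulVec, dotProduct, mul_sub, Finset.sum_sub_distrib, mul_comm]

theorem characteristic_equation_general (η : ℝ) (n : ℕ)
    (Lhat : (ℝ → (Fin n → ℂ)) →ₗ[ℂ] (Fin n → ℂ))
    (hsupp : ∀ φ ψ : ℝ → (Fin n → ℂ), (∀ θ ≤ (0:ℝ), φ θ = ψ θ) → Lhat φ = Lhat ψ)
    (z : ℂ) (hz : -η < z.re) :
    (∃ φ : ℝ → (Fin n → ℂ), (∃ θ ≤ (0:ℝ), φ θ ≠ 0) ∧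
        BUC1mem η φ (fun θ => z • φ θ) ∧ z • φ 0 = Lhat φ) ↔
      (charMatrix Lhat z).det = 0 := by
  rw [← exists_mulVec_eq_zero_iff]
  constructor
  · rintro ⟨φ, ⟨θ₀, hθ₀, hφθ₀⟩, ⟨-, -, hderiv⟩, heig⟩
    have hφ : ∀ θ ≤ (0:ℝ), φ θ = cexp (z * θ) • φ 0 := fun θ hθ => by
      simpa using (convex_Iic 0).eq_cexp_smul_of_hasDerivWithinAt hderiv self_mem_Iic hθ
    refine ⟨φ 0, fun h0 => hφθ₀ (by rw [hφ θ₀ hθ₀, h0, smul_zero]), ?_⟩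
    rw [charMatrix_mulVec, hsupp _ φ fun θ hθ => (hφ θ hθ).symm, heig, sub_self]
  · rintro ⟨v, hv, hΔv⟩
    refine ⟨fun θ => cexp (z * θ) • v, ⟨0, le_rfl, by simpa using hv⟩,
      buc1Mem_cexp_mul_ofReal_smul hz v, ?_⟩
    rw [charMatrix_mulVec, sub_eq_zero] at hΔv
    simpa using hΔv

/-- for `Re λ > -η`, `λ` is an eigenvalue of `(A+L)₀`
(there is a nonzero `φ ∈ BUC_η¹` with `φ' = λφ` on `(-∞,0]` and `φ'(0) = L̂(φ)`)
iff `det Δ(λ) = 0`. -/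
theorem characteristic_equation (η : ℝ) (hη : 0 < η) (n : ℕ) (hn : 1 ≤ n)
    (Lhat : (ℝ → (Fin n → ℂ)) →ₗ[ℂ] (Fin n → ℂ))
    (hbd : ∃ C : ℝ, ∀ φ : ℝ → (Fin n → ℂ), BUCmem η φ → ‖Lhat φ‖ ≤ C * etaNorm η φ)
    (hsupp : ∀ φ ψ : ℝ → (Fin n → ℂ), (∀ θ ≤ (0:ℝ), φ θ = ψ θ) → Lhat φ = Lhat ψ)
    (z : ℂ) (hz : -η < z.re) :
    (∃ φ : ℝ → (Fin n → ℂ), (∃ θ ≤ (0:ℝ), φ θ ≠ 0) ∧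
        BUC1mem η φ (fun θ => z • φ θ) ∧ z • φ 0 = Lhat φ) ↔
      (charMatrix Lhat z).det = 0 :=
  characteristic_equation_general η n Lhat hsupp z hz
end

section
/- Let f : BUC_η → ℝⁿ be Lipschitz on bounded sets and let x : (-∞, τ) → ℝⁿ be a maximal solution of x(t) = φ(0) + ∫₀ᵗ f(x_s)ds for t ∈ [0,τ), x(t) = φ(t) for t ≤ 0, with φ ∈ BUC_η. If sup_{t ∈ [0,τ)} ‖x(t)‖ < ∞ and τ < ∞, then the solution can be extended beyond τ; equivalently, if τ < ∞ is maximal then limsup_{t→τ⁻} ‖x(t)‖ = +∞. -/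
open Set Filter Topology

/-! Since `x` is bounded on `[0, τ)`, all its segments `x_s` lie in one ball of `BUC_η`, on which
`f` is Lipschitz. Hence `s ↦ f x_s` is bounded, the integral equation makes `x` Lipschitz, and `x`
extends continuously to a solution on `[0, τ]`. From `τ` on, a Picard iteration on `C([τ, τ + δ])`,
with `δ` small against the Lipschitz constant of `f` on a slightly larger ball, continues the
solution past `τ`. -/

variable {F G : Type*} [NormedAddCommGroup F] [NormedAddCommGroup G]

section EtaNorm

variable {η : ℝ} {φ ψ : ℝ → F}

lemma etaNorm_nonneg (η : ℝ) (φ : ℝ → F) : 0 ≤ etaNorm η φ :=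
  Real.sSup_nonneg <| by rintro _ ⟨θ, -, rfl⟩; positivity

lemma etaNorm_le {C : ℝ} (hC : 0 ≤ C) (h : ∀ θ ≤ (0:ℝ), Real.exp (η * θ) * ‖φ θ‖ ≤ C) :
    etaNorm η φ ≤ C :=
  Real.sSup_le (by rintro _ ⟨θ, hθ, rfl⟩; exact h θ hθ) hC

variable [NormedSpace ℝ F]

lemma le_etaNorm (hφ : BUCmem η φ) {θ : ℝ} (hθ : θ ≤ 0) :
    Real.exp (η * θ) * ‖φ θ‖ ≤ etaNorm η φ :=
  le_csSup hφ.2.1 ⟨θ, hθ, rfl⟩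

lemma etaNorm_sub_le (hφ : BUCmem η φ) (hψ : BUCmem η ψ) :
    etaNorm η (fun θ => φ θ - ψ θ) ≤ etaNorm η φ + etaNorm η ψ := by
  refine etaNorm_le (add_nonneg (etaNorm_nonneg η φ) (etaNorm_nonneg η ψ)) fun θ hθ => ?_
  calc Real.exp (η * θ) * ‖φ θ - ψ θ‖
      ≤ Real.exp (η * θ) * ‖φ θ‖ + Real.exp (η * θ) * ‖ψ θ‖ := by
        rw [← mul_add]; gcongr; exact norm_sub_le _ _
    _ ≤ etaNorm η φ + etaNorm η ψ := add_le_add (le_etaNorm hφ hθ) (le_etaNorm hψ hθ)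

def LipschitzOnEtaBall (η ξ κ : ℝ) (f : (ℝ → F) → G) : Prop :=
  ∀ φ ψ : ℝ → F, BUCmem η φ → BUCmem η ψ → etaNorm η φ ≤ ξ → etaNorm η ψ ≤ ξ →
    ‖f φ - f ψ‖ ≤ κ * etaNorm η (fun θ => φ θ - ψ θ)

lemma LipschitzOnEtaBall.norm_le {ξ κ : ℝ} {f : (ℝ → F) → G} (hf : LipschitzOnEtaBall η ξ κ f)
    (hκ : 0 ≤ κ) (hφ : BUCmem η φ) (hψ : BUCmem η ψ) (hφξ : etaNorm η φ ≤ ξ)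
    (hψξ : etaNorm η ψ ≤ ξ) : ‖f ψ‖ ≤ ‖f φ‖ + κ * (2 * ξ) := by
  have hdist : etaNorm η (fun θ => ψ θ - φ θ) ≤ 2 * ξ := by
    linarith [etaNorm_sub_le hψ hφ]
  calc ‖f ψ‖ ≤ ‖f φ‖ + ‖f ψ - f φ‖ := norm_le_insert' _ _
    _ ≤ ‖f φ‖ + κ * (2 * ξ) := by
      gcongr; exact (hf ψ φ hψ hφ hψξ hφξ).trans (by gcongr)

end EtaNorm

lemma UniformContinuousOn.Iic_of_Icc {β : Type*} [PseudoMetricSpace β] {g : ℝ → β} {c d : ℝ}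
    (h₁ : UniformContinuousOn g (Iic c)) (h₂ : UniformContinuousOn g (Icc c d)) :
    UniformContinuousOn g (Iic d) := by
  rw [Metric.uniformContinuousOn_iff] at h₁ h₂ ⊢
  intro ε hε
  obtain ⟨δ₁, hδ₁, H₁⟩ := h₁ (ε / 2) (half_pos hε)
  obtain ⟨δ₂, hδ₂, H₂⟩ := h₂ (ε / 2) (half_pos hε)
  refine ⟨min δ₁ δ₂, lt_min hδ₁ hδ₂, fun a ha b hb hab => ?_⟩
  wlog hle : a ≤ b generalizing a b
  · rw [dist_comm]; exact this b hb a ha (by rwa [dist_comm]) (le_of_not_ge hle)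
  have hab₁ : dist a b < δ₁ := hab.trans_le (min_le_left _ _)
  have hab₂ : dist a b < δ₂ := hab.trans_le (min_le_right _ _)
  rcases le_or_gt b c with hbc | hcb
  · exact (H₁ a (hle.trans hbc) b hbc hab₁).trans (half_lt_self hε)
  rcases le_or_gt c a with hca | hac
  · exact (H₂ a ⟨hca, hle.trans hb⟩ b ⟨hca.trans hle, hb⟩ hab₂).trans (half_lt_self hε)
  have hac' : dist a c ≤ dist a b := by
    rw [Real.dist_eq, Real.dist_eq, abs_of_neg (by linarith), abs_of_nonpos (by linarith)]
    linarith
  have hcb' : dist c b ≤ dist a b := by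
    rw [Real.dist_eq, Real.dist_eq, abs_of_neg (by linarith), abs_of_nonpos (by linarith)]
    linarith
  calc dist (g a) (g b) ≤ dist (g a) (g c) + dist (g c) (g b) := dist_triangle _ _ _
    _ < ε / 2 + ε / 2 := add_lt_add (H₁ a hac.le c self_mem_Iic (hac'.trans_lt hab₁))
        (H₂ c ⟨le_rfl, hcb.le.trans hb⟩ b ⟨hcb.le, hb⟩ (hcb'.trans_lt hab₂))
    _ = ε := add_halves ε

section Shift

variable [NormedSpace ℝ F] {η T M : ℝ} {φ y : ℝ → F}

lemma uniformContinuousOn_expWeight_Iic (hφ : BUCmem η φ) (hy0 : ∀ u ≤ (0:ℝ), y u = φ u)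
    (hyc : ContinuousOn y (Iic T)) :
    UniformContinuousOn (fun u => Real.exp (η * u) • y u) (Iic T) := by
  refine UniformContinuousOn.Iic_of_Icc (c := 0) (hφ.2.2.congr fun u hu => ?_) ?_
  · simp only [hy0 u hu]
  · exact isCompact_Icc.uniformContinuousOn_of_continuous
      ((Real.continuous_exp.comp (continuous_const_mul η)).continuousOn.smul
        (hyc.mono Icc_subset_Iic_self))

lemma exp_mul_norm_shift_le (hη : 0 ≤ η) (hφ : BUCmem η φ) (hy0 : ∀ u ≤ (0:ℝ), y u = φ u)
    (hyM : ∀ u ∈ Icc 0 T, ‖y u‖ ≤ M) {s θ : ℝ} (hs : s ∈ Icc 0 T) (hθ : θ ≤ 0) :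
    Real.exp (η * θ) * ‖y (s + θ)‖ ≤ max (etaNorm η φ) M := by
  rcases le_or_gt (s + θ) 0 with hsθ | hsθ
  · calc Real.exp (η * θ) * ‖y (s + θ)‖ ≤ Real.exp (η * (s + θ)) * ‖φ (s + θ)‖ := by
          rw [hy0 _ hsθ]; gcongr; linarith [hs.1]
      _ ≤ max (etaNorm η φ) M := (le_etaNorm hφ hsθ).trans (le_max_left _ _)
  · calc Real.exp (η * θ) * ‖y (s + θ)‖ ≤ ‖y (s + θ)‖ :=
          mul_le_of_le_one_left (norm_nonneg _)
            (Real.exp_le_one_iff.2 (mul_nonpos_of_nonneg_of_nonpos hη hθ))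
      _ ≤ max (etaNorm η φ) M := (hyM _ ⟨hsθ.le, by linarith [hs.2]⟩).trans (le_max_right _ _)

lemma etaNorm_shift_le (hη : 0 ≤ η) (hφ : BUCmem η φ) (hy0 : ∀ u ≤ (0:ℝ), y u = φ u)
    (hyM : ∀ u ∈ Icc 0 T, ‖y u‖ ≤ M) {s : ℝ} (hs : s ∈ Icc 0 T) :
    etaNorm η (fun θ => y (s + θ)) ≤ max (etaNorm η φ) M :=
  etaNorm_le (le_max_of_le_left (etaNorm_nonneg η φ))
    fun _ hθ => exp_mul_norm_shift_le hη hφ hy0 hyM hs hθ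

lemma bucmem_shift (hη : 0 ≤ η) (hφ : BUCmem η φ) (hy0 : ∀ u ≤ (0:ℝ), y u = φ u)
    (hyc : ContinuousOn y (Iic T)) (hyM : ∀ u ∈ Icc 0 T, ‖y u‖ ≤ M) {s : ℝ}
    (hs : s ∈ Icc 0 T) : BUCmem η (fun θ => y (s + θ)) := by
  have hmaps : MapsTo (fun θ => s + θ) (Iic 0) (Iic T) := fun θ hθ => by
    simp only [mem_Iic] at hθ ⊢; linarith [hs.2]
  refine ⟨hyc.comp (continuous_const_add s).continuousOn hmaps,
    ⟨_, forall_mem_image.2 fun θ hθ => exp_mul_norm_shift_le hη hφ hy0 hyM hs hθ⟩, ?_⟩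
  have huc := (uniformContinuousOn_expWeight_Iic hφ hy0 hyc).comp
    (uniformContinuous_add_left s).uniformContinuousOn hmaps
  rw [uniformContinuousOn_iff_restrict] at huc ⊢
  convert huc.const_smul (Real.exp (-(η * s))) using 1
  ext θ
  simp only [domRestrict_apply, Function.comp_apply, Pi.smul_apply, smul_smul, ← Real.exp_add]
  ring_nf

lemma exp_mul_norm_shift_sub_le (hη : 0 ≤ η) (y : ℝ → F) {s : ℝ} (hs : 0 ≤ s) (s₀ θ : ℝ) :
    Real.exp (η * θ) * ‖y (s + θ) - y (s₀ + θ)‖ ≤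
      ‖Real.exp (η * (s + θ)) • y (s + θ) - Real.exp (η * (s₀ + θ)) • y (s₀ + θ)‖ +
        |Real.exp (η * s₀) - Real.exp (η * s)| * (Real.exp (η * θ) * ‖y (s₀ + θ)‖) := by
  have key : Real.exp (η * s) • Real.exp (η * θ) • (y (s + θ) - y (s₀ + θ)) =
      (Real.exp (η * (s + θ)) • y (s + θ) - Real.exp (η * (s₀ + θ)) • y (s₀ + θ)) +
        (Real.exp (η * s₀) - Real.exp (η * s)) • Real.exp (η * θ) • y (s₀ + θ) := by
    rw [mul_add, mul_add, Real.exp_add, Real.exp_add]; module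
  calc Real.exp (η * θ) * ‖y (s + θ) - y (s₀ + θ)‖
      ≤ Real.exp (η * s) * (Real.exp (η * θ) * ‖y (s + θ) - y (s₀ + θ)‖) :=
        le_mul_of_one_le_left (by positivity) (Real.one_le_exp (mul_nonneg hη hs))
    _ = ‖Real.exp (η * s) • Real.exp (η * θ) • (y (s + θ) - y (s₀ + θ))‖ := by
        rw [norm_smul, norm_smul, Real.norm_of_nonneg (Real.exp_pos _).le,
          Real.norm_of_nonneg (Real.exp_pos _).le]
    _ ≤ _ := by
        rw [key]
        refine (norm_add_le _ _).trans_eq ?_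
        rw [norm_smul, norm_smul, Real.norm_eq_abs, Real.norm_of_nonneg (Real.exp_pos _).le]

lemma tendsto_etaNorm_shift_sub (hη : 0 ≤ η) (hφ : BUCmem η φ) (hy0 : ∀ u ≤ (0:ℝ), y u = φ u)
    (hyc : ContinuousOn y (Iic T)) (hyM : ∀ u ∈ Icc 0 T, ‖y u‖ ≤ M) {s₀ : ℝ}
    (hs₀ : s₀ ∈ Icc 0 T) :
    Tendsto (fun s => etaNorm η (fun θ => y (s + θ) - y (s₀ + θ))) (𝓝[Icc 0 T] s₀) (𝓝 0) := by
  set K := max (etaNorm η φ) M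
  rw [Metric.tendsto_nhds]
  intro ε hε
  obtain ⟨δ, hδ, hY⟩ := Metric.uniformContinuousOn_iff_le.1
    (uniformContinuousOn_expWeight_Iic hφ hy0 hyc) (ε / 2) (half_pos hε)
  have hexp : ∀ᶠ s in 𝓝 s₀, |Real.exp (η * s₀) - Real.exp (η * s)| * K < ε / 2 := by
    have hc : Continuous fun s => |Real.exp (η * s₀) - Real.exp (η * s)| * K := by fun_prop
    have ht : Tendsto (fun s => |Real.exp (η * s₀) - Real.exp (η * s)| * K) (𝓝 s₀) (𝓝 0) := by
      simpa using hc.tendsto s₀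
    exact ht.eventually_lt_const (half_pos hε)
  filter_upwards [self_mem_nhdsWithin, nhdsWithin_le_nhds (Metric.closedBall_mem_nhds s₀ hδ),
    nhdsWithin_le_nhds hexp] with s hs hsδ hsexp
  rw [Real.dist_eq, sub_zero, abs_of_nonneg (etaNorm_nonneg _ _)]
  have hK : 0 ≤ K := le_max_of_le_left (etaNorm_nonneg η φ)
  refine (etaNorm_le (C := ε / 2 + |Real.exp (η * s₀) - Real.exp (η * s)| * K) (by positivity)
    fun θ hθ => ?_).trans_lt (by linarith)
  refine (exp_mul_norm_shift_sub_le hη y hs.1 s₀ θ).trans (add_le_add ?_ ?_)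
  · rw [← dist_eq_norm]
    refine hY _ (by simp only [mem_Iic]; linarith [hs.2]) _
      (by simp only [mem_Iic]; linarith [hs₀.2]) (by rwa [dist_add_right])
  · exact mul_le_mul_of_nonneg_left (exp_mul_norm_shift_le hη hφ hy0 hyM hs₀ hθ) (abs_nonneg _)

lemma continuousOn_apply_shift {f : (ℝ → F) → G} (hη : 0 ≤ η)
    (hf : ∀ ξ > 0, ∃ κ > 0, LipschitzOnEtaBall η ξ κ f) (hφ : BUCmem η φ)
    (hy0 : ∀ u ≤ (0:ℝ), y u = φ u) (hyc : ContinuousOn y (Iic T)) :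
    ContinuousOn (fun s => f (fun θ => y (s + θ))) (Icc 0 T) := by
  obtain ⟨M, hM⟩ := isCompact_Icc.exists_bound_of_continuousOn (hyc.mono Icc_subset_Iic_self)
  have hξ : max (etaNorm η φ) M ≤ max (etaNorm η φ) M + 1 := le_add_of_nonneg_right zero_le_one
  obtain ⟨κ, -, hκ⟩ := hf _ ((le_max_of_le_left (etaNorm_nonneg η φ)).trans_lt (lt_add_one _))
  intro s₀ hs₀
  rw [ContinuousWithinAt, tendsto_iff_norm_sub_tendsto_zero]
  refine squeeze_zero' (Eventually.of_forall fun _ => norm_nonneg _) ?_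
    (by simpa using (tendsto_etaNorm_shift_sub hη hφ hy0 hyc hM hs₀).const_mul κ)
  filter_upwards [self_mem_nhdsWithin] with s hs
  exact hκ _ _ (bucmem_shift hη hφ hy0 hyc hM hs) (bucmem_shift hη hφ hy0 hyc hM hs₀)
    ((etaNorm_shift_le hη hφ hy0 hM hs).trans hξ) ((etaNorm_shift_le hη hφ hy0 hM hs₀).trans hξ)

lemma integrableOn_apply_shift_Icc {f : (ℝ → F) → G} (hη : 0 ≤ η)
    (hf : ∀ ξ > 0, ∃ κ > 0, LipschitzOnEtaBall η ξ κ f) (hφ : BUCmem η φ) {τ : ℝ}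
    (hy0 : ∀ u ≤ (0:ℝ), y u = φ u) (hyc : ContinuousOn y (Iio τ))
    (hyM : ∀ u ∈ Ico 0 τ, ‖y u‖ ≤ M) :
    MeasureTheory.IntegrableOn (fun s => f (fun θ => y (s + θ))) (Icc 0 τ) := by
  have hcont : ContinuousOn (fun s => f (fun θ => y (s + θ))) (Ico 0 τ) := fun s hs => by
    have hT : s < (s + τ) / 2 := by linarith [hs.2]
    have hTτ : (s + τ) / 2 < τ := by linarith [hs.2]
    refine ((continuousOn_apply_shift hη hf hφ hy0 (hyc.mono (Iic_subset_Iio.2 hTτ)))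
      s ⟨hs.1, hT.le⟩).mono_of_mem_nhdsWithin
      (mem_nhdsWithin.2 ⟨Iio ((s + τ) / 2), isOpen_Iio, hT, fun u hu => ⟨hu.2.1, hu.1.le⟩⟩)
  set ξ := max (etaNorm η φ) M + 1
  have hξ : max (etaNorm η φ) M ≤ ξ := le_add_of_nonneg_right zero_le_one
  obtain ⟨κ, hκ, hfκ⟩ := hf ξ ((le_max_of_le_left (etaNorm_nonneg η φ)).trans_lt (lt_add_one _))
  have hbdd : ∀ s ∈ Ico 0 τ, ‖f (fun θ => y (s + θ))‖ ≤ ‖f φ‖ + κ * (2 * ξ) := fun s hs => by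
    have hMs : ∀ u ∈ Icc 0 s, ‖y u‖ ≤ M := fun u hu => hyM u ⟨hu.1, hu.2.trans_lt hs.2⟩
    exact hfκ.norm_le hκ.le hφ
      (bucmem_shift hη hφ hy0 (hyc.mono (Iic_subset_Iio.2 hs.2)) hMs ⟨hs.1, le_rfl⟩)
      ((le_max_left _ _).trans hξ) ((etaNorm_shift_le hη hφ hy0 hMs ⟨hs.1, le_rfl⟩).trans hξ)
  exact (integrableOn_Icc_iff_integrableOn_Ico).2 <| .of_bound measure_Ico_lt_top
    (hcont.aestronglyMeasurable measurableSet_Ico) _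
    (MeasureTheory.ae_restrict_of_forall_mem measurableSet_Ico hbdd)

end Shift

lemma integral_shift_congr {α : Type*} [NormedSpace ℝ G] {f : (ℝ → α) → G}
    (hf : ∀ φ ψ : ℝ → α, (∀ θ ≤ (0:ℝ), φ θ = ψ θ) → f φ = f ψ) {x y : ℝ → α} {σ t : ℝ}
    (hxy : ∀ u < σ, y u = x u) (hσ : 0 ≤ σ) (ht : t ≤ σ) :
    ∫ s in (0:ℝ)..t, f (fun θ => y (s + θ)) = ∫ s in (0:ℝ)..t, f (fun θ => x (s + θ)) := by
  -- `y σ` and `x σ` may differ, which only affects the null set `s = σ`.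
  refine intervalIntegral.integral_congr_ae ?_
  filter_upwards [MeasureTheory.volume.ae_ne σ] with s hsσ hs
  have hsσ' : s < σ := lt_of_le_of_ne (hs.2.trans (max_le hσ ht)) hsσ
  exact hf _ _ fun θ hθ => hxy _ (by linarith)

section Splice

/-- `z` enters only through its increments `z u - z σ`, which makes the splice continuous for
every `z`. -/
noncomputable def splice (x : ℝ → F) {σ b : ℝ} (hσb : σ ≤ b) (z : C(Icc σ b, F)) (u : ℝ) : F :=
  if u ≤ σ then x u else x σ + (z (projIcc σ b hσb u) - z (projIcc σ b hσb σ))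

variable {x : ℝ → F} {σ b : ℝ} {hσb : σ ≤ b} {z w : C(Icc σ b, F)} {u : ℝ}

lemma splice_of_le (hu : u ≤ σ) : splice x hσb z u = x u := if_pos hu

lemma splice_of_ge (hu : σ ≤ u) :
    splice x hσb z u = x σ + (z (projIcc σ b hσb u) - z (projIcc σ b hσb σ)) := by
  unfold splice
  split_ifs with h
  · rw [le_antisymm h hu, sub_self, add_zero]
  · rfl

lemma continuous_splice (hx : ContinuousOn x (Iic σ)) : Continuous (splice x hσb z) :=
  continuous_if_le (f := fun u => u) continuous_id continuous_const hx
    (continuous_const.add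
      ((z.continuous.comp continuous_projIcc).sub continuous_const)).continuousOn
    fun u hu => by simp [hu]

lemma norm_splice_sub_splice_le (u : ℝ) :
    ‖splice x hσb z u - splice x hσb w u‖ ≤ 2 * dist z w := by
  rcases le_or_gt u σ with hu | hu
  · rw [splice_of_le hu, splice_of_le hu, sub_self, norm_zero]; positivity
  rw [splice_of_ge hu.le, splice_of_ge hu.le]
  set p := projIcc σ b hσb u
  set q := projIcc σ b hσb σ
  calc ‖x σ + (z p - z q) - (x σ + (w p - w q))‖ = ‖(z p - w p) - (z q - w q)‖ := by
        congr 1; abel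
    _ ≤ dist (z p) (w p) + dist (z q) (w q) := by
        rw [dist_eq_norm, dist_eq_norm]; exact norm_sub_le _ _
    _ ≤ 2 * dist z w := by
        linarith [ContinuousMap.dist_apply_le_dist (f := z) (g := w) p,
          ContinuousMap.dist_apply_le_dist (f := z) (g := w) q]

lemma norm_splice_le (hu : σ ≤ u) : ‖splice x hσb z u‖ ≤ ‖x σ‖ + 2 * ‖z‖ := by
  rw [splice_of_ge hu]
  refine (norm_add_le _ _).trans ?_
  gcongr
  refine (norm_sub_le _ _).trans ?_
  linarith [z.norm_coe_le_norm (projIcc σ b hσb u), z.norm_coe_le_norm (projIcc σ b hσb σ)]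

lemma etaNorm_splice_shift_sub_le {η : ℝ} (hη : 0 ≤ η) (s : ℝ) :
    etaNorm η (fun θ => splice x hσb z (s + θ) - splice x hσb w (s + θ)) ≤ 2 * dist z w :=
  etaNorm_le (by positivity) fun _ hθ =>
    (mul_le_of_le_one_left (norm_nonneg _)
      (Real.exp_le_one_iff.2 (mul_nonpos_of_nonneg_of_nonpos hη hθ))).trans
      (norm_splice_sub_splice_le _)

lemma bucmem_splice_shift [NormedSpace ℝ F] {η M s : ℝ} {φ : ℝ → F} (hη : 0 ≤ η)
    (hφ : BUCmem η φ) (hσ : 0 ≤ σ) (hx0 : ∀ u ≤ (0:ℝ), x u = φ u) (hxc : ContinuousOn x (Iic σ))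
    (hM : ∀ u ∈ Icc 0 σ, ‖x u‖ ≤ M) (hz : ‖z‖ ≤ 1) (hs : s ∈ Icc 0 b) :
    BUCmem η (fun θ => splice x hσb z (s + θ)) ∧
      etaNorm η (fun θ => splice x hσb z (s + θ)) ≤ max (etaNorm η φ) (M + 2) := by
  have hy0 : ∀ u ≤ (0:ℝ), splice x hσb z u = φ u := fun u hu =>
    (splice_of_le (hu.trans hσ)).trans (hx0 u hu)
  have hyM : ∀ u ∈ Icc 0 b, ‖splice x hσb z u‖ ≤ M + 2 := fun u hu => by
    rcases le_or_gt u σ with huσ | huσ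
    · rw [splice_of_le huσ]; linarith [hM u ⟨hu.1, huσ⟩]
    · linarith [norm_splice_le (x := x) (hσb := hσb) (z := z) huσ.le, hM σ ⟨hσ, le_rfl⟩]
  exact ⟨bucmem_shift hη hφ hy0 (continuous_splice hxc).continuousOn hyM hs,
    etaNorm_shift_le hη hφ hy0 hyM hs⟩

end Splice

open Metric in
theorem exists_eq_integral_of_contracting [NormedSpace ℝ F] [CompleteSpace F] {σ b r B L : ℝ}
    {K : NNReal} (hσb : σ ≤ b) (hr : 0 ≤ r) (g : C(Icc σ b, F) → ℝ → F)
    (hg : ∀ z, ContinuousOn (g z) (Icc σ b))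
    (hB : ∀ z ∈ closedBall 0 r, ∀ s ∈ Icc σ b, ‖g z s‖ ≤ B) (hBr : B * (b - σ) ≤ r)
    (hL : ∀ z ∈ closedBall 0 r, ∀ w ∈ closedBall 0 r, ∀ s ∈ Icc σ b,
      ‖g z s - g w s‖ ≤ L * dist z w)
    (hK : K < 1) (hLK : L * (b - σ) ≤ K) :
    ∃ z ∈ closedBall (0 : C(Icc σ b, F)) r, ∀ t : Icc σ b, z t = ∫ s in σ..t, g z s := by
  have hint : ∀ z, ∀ t : Icc σ b, IntervalIntegrable (g z) MeasureTheory.volume σ t :=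
    fun z t => ((hg z).mono (Icc_subset_Icc_right t.2.2)).intervalIntegrable_of_Icc t.2.1
  have hprim : ∀ z, ContinuousOn (fun t => ∫ s in σ..t, g z s) (Icc σ b) := fun z => by
    have := intervalIntegral.continuousOn_primitive_interval (μ := MeasureTheory.volume)
      (a := σ) (b := b) (f := g z) (by rw [uIcc_of_le hσb]; exact (hg z).integrableOn_Icc)
    rwa [uIcc_of_le hσb] at this
  have hest : ∀ (h : ℝ → F) (C : ℝ), (∀ s ∈ Icc σ b, ‖h s‖ ≤ C) →
      ∀ t : Icc σ b, ‖∫ s in σ..t, h s‖ ≤ C * (b - σ) := by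
    intro h C hC t
    have hC0 : 0 ≤ C := (norm_nonneg _).trans (hC σ ⟨le_rfl, hσb⟩)
    refine (intervalIntegral.norm_integral_le_of_norm_le_const fun s hs => hC s ?_).trans ?_
    · rw [uIoc_of_le t.2.1] at hs; exact ⟨hs.1.le, hs.2.trans t.2.2⟩
    · rw [abs_of_nonneg (sub_nonneg.2 t.2.1)]; gcongr; exact t.2.2
  let P : C(Icc σ b, F) → C(Icc σ b, F) := fun z =>
    ⟨fun t => ∫ s in σ..t, g z s, continuousOn_iff_continuous_domRestrict.1 (hprim z)⟩
  have hmaps : MapsTo P (closedBall 0 r) (closedBall 0 r) := fun z hz =>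
    mem_closedBall_zero_iff.2 <| (ContinuousMap.norm_le _ hr).2 fun t =>
      (hest _ _ (hB z hz) t).trans hBr
  have hcontr : ContractingWith K (hmaps.restrict P _ _) := by
    refine ⟨hK, LipschitzWith.of_dist_le_mul fun z w => ?_⟩
    have hLzw : 0 ≤ L * dist z w :=
      (norm_nonneg _).trans (hL z z.2 w w.2 σ ⟨le_rfl, hσb⟩)
    refine (ContinuousMap.dist_le (by positivity)).2 fun t => ?_
    rw [dist_eq_norm]
    change ‖(∫ s in σ..t, g z s) - ∫ s in σ..t, g w s‖ ≤ _
    rw [← intervalIntegral.integral_sub (hint z t) (hint w t)]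
    refine (hest _ _ (hL z z.2 w w.2) t).trans ?_
    calc L * dist z w * (b - σ) = L * (b - σ) * dist z w := by ring
      _ ≤ K * dist z w := by gcongr
  obtain ⟨z, hz, hfix, -⟩ := hcontr.exists_fixedPoint' isClosed_closedBall.isComplete hmaps
    (mem_closedBall_self hr) (edist_ne_top _ _)
  exact ⟨z, hz, fun t => (DFunLike.congr_fun hfix t).symm⟩

section Continuation

variable [NormedSpace ℝ F] {f : (ℝ → F) → F} {η : ℝ} {φ x : ℝ → F}

theorem exists_solution_on_Icc_of_bounded (hη : 0 ≤ η)
    (hf : ∀ ξ > 0, ∃ κ > 0, LipschitzOnEtaBall η ξ κ f)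
    (hsupp : ∀ φ ψ : ℝ → F, (∀ θ ≤ (0:ℝ), φ θ = ψ θ) → f φ = f ψ) (hφ : BUCmem η φ) {τ M : ℝ}
    (hτ : 0 < τ) (hx0 : ∀ u ≤ (0:ℝ), x u = φ u) (hxc : ContinuousOn x (Iio τ))
    (hsol : ∀ t ∈ Ico 0 τ, x t = φ 0 + ∫ s in (0:ℝ)..t, f (fun θ => x (s + θ)))
    (hM : ∀ t ∈ Ico 0 τ, ‖x t‖ ≤ M) :
    ∃ x' : ℝ → F, (∀ t < τ, x' t = x t) ∧ ContinuousOn x' (Iic τ) ∧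
      ∀ t ∈ Icc 0 τ, x' t = φ 0 + ∫ s in (0:ℝ)..t, f (fun θ => x' (s + θ)) := by
  set g := fun s => f (fun θ => x (s + θ))
  have hg_int : MeasureTheory.IntegrableOn g (Icc 0 τ) :=
    integrableOn_apply_shift_Icc hη hf hφ hx0 hxc hM
  set x' := Function.update x τ (φ 0 + ∫ s in (0:ℝ)..τ, g s)
  have hx'x : ∀ t < τ, x' t = x t := fun t ht => Function.update_of_ne ht.ne _ _
  have hx'g : ∀ t ∈ Icc 0 τ, x' t = φ 0 + ∫ s in (0:ℝ)..t, g s := fun t ht => by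
    rcases ht.2.lt_or_eq with htτ | rfl
    · rw [hx'x t htτ, hsol t ⟨ht.1, htτ⟩]
    · exact Function.update_self _ _ _
  refine ⟨x', hx'x, ?_, fun t ht => by rw [hx'g t ht, integral_shift_congr hsupp hx'x hτ.le ht.2]⟩
  have hIcc : ContinuousOn x' (Icc 0 τ) := by
    have := intervalIntegral.continuousOn_primitive_interval (μ := MeasureTheory.volume)
      (a := 0) (b := τ) (f := g) (by rwa [uIcc_of_le hτ.le])
    rw [uIcc_of_le hτ.le] at this
    exact (continuousOn_const.add this).congr hx'g
  have hIic : ContinuousOn x' (Iic 0) :=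
    (hxc.mono (Iic_subset_Iio.2 hτ)).congr fun t ht => hx'x t (ht.trans_lt hτ)
  simpa [Iic_union_Icc_eq_Iic hτ.le] using hIic.union_of_isClosed hIcc isClosed_Iic isClosed_Icc

variable [CompleteSpace F]

theorem exists_local_solution_from (hη : 0 ≤ η)
    (hf : ∀ ξ > 0, ∃ κ > 0, LipschitzOnEtaBall η ξ κ f) (hφ : BUCmem η φ) {σ : ℝ} (hσ : 0 ≤ σ)
    (hx0 : ∀ u ≤ (0:ℝ), x u = φ u) (hxc : ContinuousOn x (Iic σ)) :
    ∃ δ > 0, ∃ y : ℝ → F, (∀ u ≤ σ, y u = x u) ∧ Continuous y ∧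
      ∀ t ∈ Icc σ (σ + δ), y t = x σ + ∫ s in σ..t, f (fun θ => y (s + θ)) := by
  obtain ⟨M, hM⟩ := isCompact_Icc.exists_bound_of_continuousOn
    (hxc.mono (Icc_subset_Iic_self : Icc 0 σ ⊆ Iic σ))
  set ξ := max (etaNorm η φ) (M + 2)
  have hξ : 0 < ξ := lt_max_of_lt_right (by linarith [(norm_nonneg _).trans (hM σ ⟨hσ, le_rfl⟩)])
  obtain ⟨κ, hκ, hfκ⟩ := hf ξ hξ
  set B := ‖f φ‖ + κ * (2 * ξ)
  have hB : 0 ≤ B := by positivity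
  -- `B * δ ≤ 1` keeps the Picard map in the unit ball, `2 * κ * δ ≤ 1 / 2` makes it contract.
  set δ := (B + 4 * κ)⁻¹
  have hδ : 0 < δ := by positivity
  have hσb : σ ≤ σ + δ := le_add_of_nonneg_right hδ.le
  have hy0 : ∀ z, ∀ u ≤ (0:ℝ), splice x hσb z u = φ u := fun z u hu =>
    (splice_of_le (hu.trans hσ)).trans (hx0 u hu)
  have hbuc : ∀ z ∈ Metric.closedBall (0 : C(Icc σ (σ + δ), F)) 1, ∀ s ∈ Icc 0 (σ + δ),
      BUCmem η (fun θ => splice x hσb z (s + θ)) ∧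
        etaNorm η (fun θ => splice x hσb z (s + θ)) ≤ ξ := fun z hz s hs =>
    bucmem_splice_shift hη hφ hσ hx0 hxc hM (mem_closedBall_zero_iff.1 hz) hs
  obtain ⟨z, -, hz⟩ := exists_eq_integral_of_contracting (K := 1 / 2) hσb zero_le_one
    (fun z s => f (fun θ => splice x hσb z (s + θ)))
    (fun z => (continuousOn_apply_shift hη hf hφ (hy0 z) (continuous_splice hxc).continuousOn).mono
      (Icc_subset_Icc_left hσ))
    (fun z hz s hs => hfκ.norm_le hκ.le hφ (hbuc z hz s ⟨hσ.trans hs.1, hs.2⟩).1 (le_max_left _ _)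
      (hbuc z hz s ⟨hσ.trans hs.1, hs.2⟩).2)
    (by rw [add_sub_cancel_left, ← div_eq_mul_inv, div_le_one (by positivity)]; linarith)
    (fun z hz w hw s hs => by
      have hs' : s ∈ Icc 0 (σ + δ) := ⟨hσ.trans hs.1, hs.2⟩
      refine (hfκ _ _ (hbuc z hz s hs').1 (hbuc w hw s hs').1 (hbuc z hz s hs').2
        (hbuc w hw s hs').2).trans ?_
      rw [mul_assoc]; gcongr; exact etaNorm_splice_shift_sub_le hη s)
    (by norm_num) (by
      rw [add_sub_cancel_left, ← div_eq_mul_inv, div_le_iff₀ (by positivity)]; push_cast; linarith)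
  refine ⟨δ, hδ, splice x hσb z, fun u hu => splice_of_le hu, continuous_splice hxc,
    fun t ht => ?_⟩
  rw [splice_of_ge ht.1, hz, hz, projIcc_of_mem hσb ht, projIcc_left, Subtype.coe_mk,
    intervalIntegral.integral_same, sub_zero]

theorem exists_extension_of_solution_on_Icc (hη : 0 ≤ η)
    (hf : ∀ ξ > 0, ∃ κ > 0, LipschitzOnEtaBall η ξ κ f)
    (hsupp : ∀ φ ψ : ℝ → F, (∀ θ ≤ (0:ℝ), φ θ = ψ θ) → f φ = f ψ) (hφ : BUCmem η φ) {σ : ℝ}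
    (hσ : 0 ≤ σ) (hx0 : ∀ u ≤ (0:ℝ), x u = φ u) (hxc : ContinuousOn x (Iic σ))
    (hsol : ∀ t ∈ Icc 0 σ, x t = φ 0 + ∫ s in (0:ℝ)..t, f (fun θ => x (s + θ))) :
    ∃ δ > 0, ∃ y : ℝ → F, (∀ u ≤ σ, y u = x u) ∧ Continuous y ∧
      ∀ t ∈ Icc 0 (σ + δ), y t = φ 0 + ∫ s in (0:ℝ)..t, f (fun θ => y (s + θ)) := by
  obtain ⟨δ, hδ, y, hyx, hyc, hy⟩ := exists_local_solution_from hη hf hφ hσ hx0 hxc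
  have hcongr : ∀ t ≤ σ, ∫ s in (0:ℝ)..t, f (fun θ => y (s + θ)) =
      ∫ s in (0:ℝ)..t, f (fun θ => x (s + θ)) := fun t ht =>
    integral_shift_congr hsupp (fun u hu => hyx u hu.le) hσ ht
  have hint : ∀ a c, a ∈ Icc 0 (σ + δ) → c ∈ Icc 0 (σ + δ) →
      IntervalIntegrable (fun s => f (fun θ => y (s + θ))) MeasureTheory.volume a c :=
    fun a c ha hc => ((continuousOn_apply_shift hη hf hφ
      (fun u hu => (hyx u (hu.trans hσ)).trans (hx0 u hu)) hyc.continuousOn).mono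
        (uIcc_subset_Icc ha hc)).intervalIntegrable
  refine ⟨δ, hδ, y, hyx, hyc, fun t ht => ?_⟩
  rcases le_or_gt t σ with htσ | hσt
  · rw [hyx t htσ, hsol t ⟨ht.1, htσ⟩, hcongr t htσ]
  have hσ' : σ ∈ Icc 0 (σ + δ) := ⟨hσ, le_add_of_nonneg_right hδ.le⟩
  rw [hy t ⟨hσt.le, ht.2⟩, ← intervalIntegral.integral_add_adjacent_intervals
    (hint 0 σ ⟨le_rfl, hσ'.1.trans hσ'.2⟩ hσ') (hint σ t hσ' ht), ← add_assoc, hcongr σ le_rfl,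
    ← hsol σ ⟨hσ, le_rfl⟩]

end Continuation

/-- if `f` is Lipschitz on bounded sets (of `BUC_η`), `x` solves the FDE
on `[0,τ)` with history `φ ∈ BUC_η`, `τ < ∞`, and `x` is bounded on `[0,τ)`, then the
solution extends beyond `τ`; equivalently, at a finite maximal time the solution blows up. -/
theorem solution_extension (η : ℝ) (hη : 0 < η) (n : ℕ)
    (f : (ℝ → (Fin n → ℝ)) → (Fin n → ℝ))
    (hf : ∀ ξ > (0:ℝ), ∃ κ > (0:ℝ), ∀ φ ψ : ℝ → (Fin n → ℝ),
      BUCmem η φ → BUCmem η ψ → etaNorm η φ ≤ ξ → etaNorm η ψ ≤ ξ →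
      ‖f φ - f ψ‖ ≤ κ * etaNorm η (fun θ => φ θ - ψ θ))
    (hsupp : ∀ φ ψ : ℝ → (Fin n → ℝ), (∀ θ ≤ (0:ℝ), φ θ = ψ θ) → f φ = f ψ)
    (τ : ℝ) (hτ : 0 < τ)
    (φ : ℝ → (Fin n → ℝ)) (hφ : BUCmem η φ)
    (x : ℝ → (Fin n → ℝ))
    (hx0 : ∀ t ≤ (0:ℝ), x t = φ t)
    (hxc : ContinuousOn x (Set.Iio τ))
    (hsol : ∀ t ∈ Set.Ico (0:ℝ) τ, x t = φ 0 + ∫ s in (0:ℝ)..t, f (fun θ => x (s + θ)))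
    (hbd : ∃ M : ℝ, ∀ t ∈ Set.Ico (0:ℝ) τ, ‖x t‖ ≤ M) :
    ∃ ε > (0:ℝ), ∃ y : ℝ → (Fin n → ℝ),
      (∀ t < τ, y t = x t) ∧ ContinuousOn y (Set.Iio (τ + ε)) ∧
      ∀ t ∈ Set.Ico (0:ℝ) (τ + ε), y t = φ 0 + ∫ s in (0:ℝ)..t, f (fun θ => y (s + θ)) := by
  obtain ⟨M, hM⟩ := hbd
  obtain ⟨x', hx'x, hx'c, hx'sol⟩ :=
    exists_solution_on_Icc_of_bounded hη.le hf hsupp hφ hτ hx0 hxc hsol hM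
  obtain ⟨ε, hε, y, hyx', hyc, hysol⟩ := exists_extension_of_solution_on_Icc hη.le hf hsupp hφ hτ.le
    (fun t ht => (hx'x t (ht.trans_lt hτ)).trans (hx0 t ht)) hx'c hx'sol
  exact ⟨ε, hε, y, fun t ht => (hyx' t ht.le).trans (hx'x t ht), hyc.continuousOn,
    fun t ht => hysol t ⟨ht.1, ht.2.le⟩⟩
end
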